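/- arXiv:1004.1574 — 2 statements merged into one kernel-verified Lean document; each statement's English description precedes it below -/
import Mathlib

section
/- Let $(X_k)_{k=0}^n$ be an adapted nonnegative integrable process with Snell envelope $U$ defined by $U_n=X_n$ and $U_k=\max(E(U_{k+1}\mid\mathcal{F}_k),X_k)$ for $k<n$. Then $\tau^*=\min\{k\le n: U_k=X_k\}$ is a stopping time and $E[X_{\tau^*}]=U_0=\max_{\tau\in\mathcal{T}_n}E[X_\tau]$. -/
/-! On `{k < τ*}` we have `U k ≠ X k`, so there `U k = E[U (k+1) | ℱ k]`, while everywhere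
`E[U (k+1) | ℱ k] ≤ U k` and `X k ≤ U k`. Writing
`f τ = f 0 + ∑ k < n, 1{k < τ} (f (k+1) - f k)` and conditioning each increment on `ℱ k`, where
`{k < τ}` lives, gives `E[X τ] ≤ E[U τ] ≤ E[U 0]` for every stopping time `τ ≤ n`, with equality
throughout for `τ = τ*`. -/

open MeasureTheory Filter

namespace MeasureTheory

variable {Ω : Type*} {m : MeasurableSpace Ω} {μ : Measure Ω} {ℱ : Filtration ℕ m}

theorem apply_min_eq_add_sum_indicator {β : Type*} [AddCommGroup β] (f : ℕ → Ω → β) (τ : Ω → ℕ)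
    (N : ℕ) (ω : Ω) :
    f (min (τ ω) N) ω =
      f 0 ω + ∑ k ∈ Finset.range N, {ω | k < τ ω}.indicator (fun ω => f (k + 1) ω - f k ω) ω := by
  induction N with
  | zero => simp
  | succ N ih =>
    rw [Finset.sum_range_succ, ← add_assoc, ← ih]
    by_cases hN : N < τ ω
    · rw [Set.indicator_of_mem (show ω ∈ {ω | N < τ ω} from hN), min_eq_right hN.le,
        min_eq_right (Nat.succ_le_of_lt hN)]
      abel
    · rw [Set.indicator_of_notMem (show ω ∉ {ω | N < τ ω} from hN), add_zero,
        min_eq_left (not_lt.mp hN), min_eq_left (Nat.le_succ_of_le (not_lt.mp hN))]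

theorem measurableSet_lt_of_isStoppingTime {τ : Ω → ℕ}
    (hτ : IsStoppingTime ℱ (fun ω => (τ ω : WithTop ℕ))) (k : ℕ) :
    MeasurableSet[ℱ k] {ω | k < τ ω} := by
  simpa using hτ.measurableSet_gt k

theorem integrable_comp_of_isStoppingTime {f : ℕ → Ω → ℝ} {τ : Ω → ℕ} {N : ℕ}
    (hτ : IsStoppingTime ℱ (fun ω => (τ ω : WithTop ℕ))) (hτN : ∀ ω, τ ω ≤ N)
    (hf : ∀ k ≤ N, Integrable (f k) μ) :
    Integrable (fun ω => f (τ ω) ω) μ := by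
  refine (integrable_stoppedValue ℕ hτ (u := fun k => f (min k N))
    (fun k => hf _ (min_le_right _ _)) (N := N) fun ω => WithTop.coe_le_coe.mpr (hτN ω)).congr
    (ae_of_all _ fun ω => ?_)
  change f (min (τ ω) N) ω = f (τ ω) ω
  rw [min_eq_left (hτN ω)]

theorem setIntegral_sub_eq_setIntegral_condExp_sub {m' : MeasurableSpace Ω} (hm : m' ≤ m)
    [SigmaFinite (μ.trim hm)] {f g : Ω → ℝ} (hf : Integrable f μ) (hg : Integrable g μ)
    {s : Set Ω} (hs : MeasurableSet[m'] s) :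
    ∫ ω in s, (f ω - g ω) ∂μ = ∫ ω in s, ((μ[f|m']) ω - g ω) ∂μ := by
  rw [integral_sub hf.integrableOn hg.integrableOn,
    integral_sub integrable_condExp.integrableOn hg.integrableOn, setIntegral_condExp hm hf hs]

theorem integral_comp_isStoppingTime_eq_add_sum [SigmaFiniteFiltration μ ℱ] {f : ℕ → Ω → ℝ}
    {τ : Ω → ℕ} {N : ℕ} (hτ : IsStoppingTime ℱ (fun ω => (τ ω : WithTop ℕ)))
    (hτN : ∀ ω, τ ω ≤ N) (hf : ∀ k ≤ N, Integrable (f k) μ) :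
    ∫ ω, f (τ ω) ω ∂μ = ∫ ω, f 0 ω ∂μ +
      ∑ k ∈ Finset.range N, ∫ ω in {ω | k < τ ω}, ((μ[f (k + 1)|ℱ k]) ω - f k ω) ∂μ := by
  have hset k : MeasurableSet {ω | k < τ ω} := ℱ.le k _ (measurableSet_lt_of_isStoppingTime hτ k)
  have hincr : ∀ k ∈ Finset.range N,
      Integrable ({ω | k < τ ω}.indicator fun ω => f (k + 1) ω - f k ω) μ := fun k hk =>
    ((hf _ (Finset.mem_range.mp hk)).sub (hf _ (Finset.mem_range.mp hk).le)).indicator (hset k)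
  have htelescope ω : f (τ ω) ω = f 0 ω +
      ∑ k ∈ Finset.range N, {ω | k < τ ω}.indicator (fun ω => f (k + 1) ω - f k ω) ω := by
    rw [← apply_min_eq_add_sum_indicator, min_eq_left (hτN ω)]
  simp only [htelescope]
  rw [integral_add (hf 0 N.zero_le) (integrable_finsetSum _ hincr), integral_finsetSum _ hincr]
  refine congrArg _ (Finset.sum_congr rfl fun k hk => ?_)
  rw [integral_indicator (hset k), setIntegral_sub_eq_setIntegral_condExp_sub (ℱ.le k)
    (hf _ (Finset.mem_range.mp hk)) (hf _ (Finset.mem_range.mp hk).le)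
    (measurableSet_lt_of_isStoppingTime hτ k)]

theorem integral_comp_isStoppingTime_le_of_condExp_le [SigmaFiniteFiltration μ ℱ]
    {f : ℕ → Ω → ℝ} {τ : Ω → ℕ} {N : ℕ} (hτ : IsStoppingTime ℱ (fun ω => (τ ω : WithTop ℕ)))
    (hτN : ∀ ω, τ ω ≤ N) (hf : ∀ k ≤ N, Integrable (f k) μ)
    (hsuper : ∀ k < N, μ[f (k + 1)|ℱ k] ≤ᵐ[μ] f k) :
    ∫ ω, f (τ ω) ω ∂μ ≤ ∫ ω, f 0 ω ∂μ := by
  rw [integral_comp_isStoppingTime_eq_add_sum hτ hτN hf, add_le_iff_nonpos_right]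
  refine Finset.sum_nonpos fun k hk => integral_nonpos_of_ae (ae_restrict_of_ae ?_)
  filter_upwards [hsuper k (Finset.mem_range.mp hk)] with ω hω
  exact sub_nonpos.mpr hω

theorem integral_comp_isStoppingTime_eq_of_condExp_eq [SigmaFiniteFiltration μ ℱ]
    {f : ℕ → Ω → ℝ} {τ : Ω → ℕ} {N : ℕ} (hτ : IsStoppingTime ℱ (fun ω => (τ ω : WithTop ℕ)))
    (hτN : ∀ ω, τ ω ≤ N) (hf : ∀ k ≤ N, Integrable (f k) μ)
    (hmart : ∀ k < N, ∀ᵐ ω ∂μ, k < τ ω → (μ[f (k + 1)|ℱ k]) ω = f k ω) :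
    ∫ ω, f (τ ω) ω ∂μ = ∫ ω, f 0 ω ∂μ := by
  rw [integral_comp_isStoppingTime_eq_add_sum hτ hτN hf, add_eq_left]
  refine Finset.sum_eq_zero fun k hk => integral_eq_zero_of_ae ?_
  rw [EventuallyEq, ae_restrict_iff' (ℱ.le k _ (measurableSet_lt_of_isStoppingTime hτ k))]
  filter_upwards [hmart k (Finset.mem_range.mp hk)] with ω hω hlt
  exact sub_eq_zero.mpr (hω hlt)

theorem isStoppingTime_sInf_setOf_mem {A : ℕ → Set Ω} {n : ℕ}
    (hA : ∀ k ≤ n, MeasurableSet[ℱ k] (A k)) (hAn : A n = Set.univ) :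
    IsStoppingTime ℱ (fun ω => ((sInf {j | ω ∈ A j} : ℕ) : WithTop ℕ)) := by
  have hne ω : {j | ω ∈ A j}.Nonempty := ⟨n, by simp [hAn]⟩
  intro k
  have hset : {ω | ((sInf {j | ω ∈ A j} : ℕ) : WithTop ℕ) ≤ k} = ⋃ j ∈ Set.Iic (min k n), A j := by
    ext ω
    simp only [Set.mem_ofPred_eq, Nat.cast_le, Set.mem_iUnion, Set.mem_Iic, le_min_iff,
      exists_prop]
    constructor
    · intro h
      exact ⟨_, ⟨h, (Nat.sInf_le (show ω ∈ A n by simp [hAn]))⟩, Nat.sInf_mem (hne ω)⟩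
    · rintro ⟨j, ⟨hjk, -⟩, hj⟩
      exact (Nat.sInf_le (show j ∈ {j | ω ∈ A j} from hj)).trans hjk
  change MeasurableSet[ℱ k] {ω | ((sInf {j | ω ∈ A j} : ℕ) : WithTop ℕ) ≤ k}
  rw [hset]
  exact MeasurableSet.biUnion (Set.to_countable _) fun j hj =>
    ℱ.mono (le_min_iff.mp hj).1 _ (hA j (le_min_iff.mp hj).2)

structure IsSnellEnvelope (μ : Measure Ω) (ℱ : Filtration ℕ m) (n : ℕ) (X U : ℕ → Ω → ℝ) :
    Prop where
  eq_terminal : U n = X n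
  eq_max_condExp : ∀ k < n, U k = fun ω => max ((μ[U (k + 1)|ℱ k]) ω) (X k ω)

namespace IsSnellEnvelope

variable {n : ℕ} {X U : ℕ → Ω → ℝ} (hU : IsSnellEnvelope μ ℱ n X U)
include hU

theorem le {k : ℕ} (hk : k ≤ n) : X k ≤ U k := by
  rcases hk.lt_or_eq with hk | rfl
  · rw [hU.eq_max_condExp k hk]
    exact fun ω => le_max_right _ _
  · rw [hU.eq_terminal]

theorem condExp_le {k : ℕ} (hk : k < n) : μ[U (k + 1)|ℱ k] ≤ U k := by
  rw [hU.eq_max_condExp k hk]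
  exact fun ω => le_max_left _ _

theorem condExp_apply_eq_of_ne {k : ℕ} (hk : k < n) {ω : Ω} (hω : U k ω ≠ X k ω) :
    (μ[U (k + 1)|ℱ k]) ω = U k ω := by
  rw [hU.eq_max_condExp k hk] at hω ⊢
  exact (max_eq_left (le_of_not_ge fun h => hω (max_eq_right h))).symm

theorem measurable (hXad : Adapted ℱ X) {k : ℕ} (hk : k ≤ n) : Measurable[ℱ k] (U k) := by
  rcases hk.lt_or_eq with hk | rfl
  · rw [hU.eq_max_condExp k hk]
    exact stronglyMeasurable_condExp.measurable.max (hXad k)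
  · rw [hU.eq_terminal]
    exact hXad k

theorem integrable (hXint : ∀ k ≤ n, Integrable (X k) μ) {k : ℕ} (hk : k ≤ n) :
    Integrable (U k) μ := by
  rcases hk.lt_or_eq with hk | rfl
  · rw [hU.eq_max_condExp k hk]
    exact integrable_condExp.sup (hXint k hk.le)
  · rw [hU.eq_terminal]
    exact hXint k le_rfl

theorem isStoppingTime_sInf (hXad : Adapted ℱ X) :
    IsStoppingTime ℱ (fun ω => ((sInf {k | U k ω = X k ω} : ℕ) : WithTop ℕ)) :=
  isStoppingTime_sInf_setOf_mem (A := fun k => {ω | U k ω = X k ω})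
    (fun k hk => measurableSet_eq_fun (hU.measurable hXad hk) (hXad k))
    (by simp [hU.eq_terminal])

theorem sInf_le (ω : Ω) : sInf {k | U k ω = X k ω} ≤ n :=
  Nat.sInf_le (congrFun hU.eq_terminal ω)

theorem apply_sInf_eq (ω : Ω) :
    U (sInf {k | U k ω = X k ω}) ω = X (sInf {k | U k ω = X k ω}) ω :=
  Nat.sInf_mem (s := {k | U k ω = X k ω}) ⟨n, congrFun hU.eq_terminal ω⟩

variable [SigmaFiniteFiltration μ ℱ]

theorem integral_comp_sInf_eq (hXad : Adapted ℱ X) (hXint : ∀ k ≤ n, Integrable (X k) μ) :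
    ∫ ω, X (sInf {k | U k ω = X k ω}) ω ∂μ = ∫ ω, U 0 ω ∂μ := by
  simp_rw [← hU.apply_sInf_eq]
  refine integral_comp_isStoppingTime_eq_of_condExp_eq (hU.isStoppingTime_sInf hXad) hU.sInf_le
    (fun _ => hU.integrable hXint) fun k hk => ae_of_all _ fun ω hω => ?_
  exact hU.condExp_apply_eq_of_ne hk fun h =>
    (Nat.sInf_le (show k ∈ {k | U k ω = X k ω} from h)).not_gt hω

theorem integral_comp_isStoppingTime_le {τ : Ω → ℕ}
    (hτ : IsStoppingTime ℱ (fun ω => (τ ω : WithTop ℕ))) (hτn : ∀ ω, τ ω ≤ n) (hXint : ∀ k ≤ n, Integrable (X k) μ) :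
    ∫ ω, X (τ ω) ω ∂μ ≤ ∫ ω, U 0 ω ∂μ :=
  calc ∫ ω, X (τ ω) ω ∂μ ≤ ∫ ω, U (τ ω) ω ∂μ :=
        integral_mono (integrable_comp_of_isStoppingTime hτ hτn hXint)
          (integrable_comp_of_isStoppingTime hτ hτn fun _ => hU.integrable hXint)
          fun ω => hU.le (hτn ω) ω
    _ ≤ ∫ ω, U 0 ω ∂μ :=
        integral_comp_isStoppingTime_le_of_condExp_le hτ hτn (fun _ => hU.integrable hXint)
          fun _ hk => ae_of_all _ (hU.condExp_le hk)

end IsSnellEnvelope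

end MeasureTheory

theorem stmt_9_general {Ω : Type*} {m : MeasurableSpace Ω} (μ : Measure Ω)
    [IsProbabilityMeasure μ] (ℱ : Filtration ℕ m) (n : ℕ)
    (X : ℕ → Ω → ℝ) (hXad : Adapted ℱ X)
    (hXint : ∀ k, Integrable (X k) μ)
    (U : ℕ → Ω → ℝ) (hUn : U n = X n)
    (hUk : ∀ k < n, U k = fun ω => max ((μ[U (k + 1)|ℱ k]) ω) (X k ω))
    (τstar : Ω → ℕ) (hτstar : ∀ ω, τstar ω = sInf {k | U k ω = X k ω}) :
    IsStoppingTime ℱ (fun ω => (τstar ω : WithTop ℕ)) ∧ (∀ ω, τstar ω ≤ n) ∧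
      (∫ ω, X (τstar ω) ω ∂μ) = (∫ ω, U 0 ω ∂μ) ∧
      IsGreatest {r : ℝ | ∃ τ : Ω → ℕ, IsStoppingTime ℱ (fun ω => (τ ω : WithTop ℕ)) ∧ (∀ ω, τ ω ≤ n) ∧
          r = ∫ ω, X (τ ω) ω ∂μ}
        (∫ ω, U 0 ω ∂μ) := by
  have hU : IsSnellEnvelope μ ℱ n X U := ⟨hUn, hUk⟩
  obtain rfl : τstar = fun ω => sInf {k | U k ω = X k ω} := funext hτstar
  have hopt := hU.integral_comp_sInf_eq hXad fun k _ => hXint k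
  refine ⟨hU.isStoppingTime_sInf hXad, hU.sInf_le, hopt,
    ⟨_, hU.isStoppingTime_sInf hXad, hU.sInf_le, hopt.symm⟩, ?_⟩
  rintro _ ⟨τ, hτ, hτn, rfl⟩
  exact hU.integral_comp_isStoppingTime_le hτ hτn fun k _ => hXint k

/-- The first time the Snell envelope `U` meets `X`, `τ* = min{k ≤ n : U k = X k}`,
is an optimal stopping time: it is a stopping time and `E[X_{τ*}] = E[U 0]`,
which is the maximum of `E[X_τ]` over all stopping times `τ ≤ n`. -/
theorem stmt_9 {Ω : Type*} {m : MeasurableSpace Ω} (μ : Measure Ω)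
    [IsProbabilityMeasure μ] (ℱ : Filtration ℕ m) (n : ℕ)
    (X : ℕ → Ω → ℝ) (hXad : Adapted ℱ X)
    (hXpos : ∀ k ω, 0 ≤ X k ω) (hXint : ∀ k, Integrable (X k) μ)
    (U : ℕ → Ω → ℝ) (hUn : U n = X n)
    (hUk : ∀ k < n, U k = fun ω => max ((μ[U (k + 1)|ℱ k]) ω) (X k ω))
    (τstar : Ω → ℕ) (hτstar : ∀ ω, τstar ω = sInf {k | U k ω = X k ω}) :
    IsStoppingTime ℱ (fun ω => (τstar ω : WithTop ℕ)) ∧ (∀ ω, τstar ω ≤ n) ∧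
      (∫ ω, X (τstar ω) ω ∂μ) = (∫ ω, U 0 ω ∂μ) ∧
      IsGreatest {r : ℝ | ∃ τ : Ω → ℕ, IsStoppingTime ℱ (fun ω => (τ ω : WithTop ℕ)) ∧ (∀ ω, τ ω ≤ n) ∧
          r = ∫ ω, X (τ ω) ω ∂μ}
        (∫ ω, U 0 ω ∂μ) :=
  stmt_9_general μ ℱ n X hXad hXint U hUn hUk τstar hτstar
end

section
/- Fix $n$, an initial capital $x>0$, and define backward value functions $H^{(n)}_k$ by $H^{(n)}_n(y,u^{(1)},\dots,u^{(n)})=(\phi^{(n)}_n(u^{(1)},\dots,u^{(n)})-y)^+$ and, for $k<n$, $H^{(n)}_k(y,u^{(1)},\dots,u^{(k)})=\max\big((\phi^{(n)}_k(u^{(1)},\dots,u^{(k)})-y)^+,\ \frac{1}{d+1}\min_{u\in K_{J_n}}\sum_{i=1}^{d+1}H^{(n)}_{k+1}(y(1+\langle u,w^{n,i}\rangle),u^{(1)},\dots,u^{(k)},w^{(i)})\big)$. Then for every admissible self-financing strategy $\pi$ with initial capital at most $x$ in the $n$-step multinomial market, $R_n(\pi)\ge H^{(n)}_0(x)$, and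 the strategy $\tilde\pi$ defined by choosing at each step a minimizer $h^{(n)}_k(V^{\tilde\pi}(k),\xi^{(1)},\dots,\xi^{(k)})\in K_{J_n}$ achieves $R_n(\tilde\pi)=H^{(n)}_0(x)$; hence $R_n(x)=H^{(n)}_0(x)$. -/
/-!
Along any self-financing strategy, the one-step average of `H_{k+1}(V_{k+1})` dominates the
continuation value of `H_k` at `V_k`, and before the first time `τ*` at which `H_k(V_k)` meets the
payoff the two are equal; hence `k ↦ H_k(V_k)` is a submartingale up to `τ*`, and stopping at `τ*`
extracts at least `H_0(V_0) ≥ H_0(x)`, since `H_0` is antitone in the wealth. Along the strategy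
that chooses a minimiser at every step, `H_k(V_k)` is a supermartingale dominating the payoff, so
no stopping time extracts more than `H_0(x)`. Minimisers exist because `K` is compact and each
`H_k` is continuous in the wealth, being a maximum with an infimum over `K` of continuous functions.
Every conditional expectation is an average over the `d + 1` values of the next coordinate, and
measurability for the filtration means depending only on the past coordinates.
-/

open MeasureTheory Finset Function
open scoped ENNReal

namespace MultinomialShortfall

theorem sum_sum_update {ι α M : Type*} [Fintype ι] [DecidableEq ι] [Fintype α]
    [AddCommMonoid M] (k : ι) (f : (ι → α) → M) :
    ∑ ω, ∑ a, f (update ω k a) = Fintype.card α • ∑ ω, f ω := by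
  have hinv : Involutive fun p : (ι → α) × α => (update p.1 k p.2, p.1 k) := by
    rintro ⟨ω, a⟩
    simp
  rw [← Fintype.sum_prod_type',
    Fintype.sum_bijective _ hinv.bijective _ (fun p => f p.1) fun _ => rfl,
    Fintype.sum_prod_type, smul_sum]
  simp

theorem sum_min_stop_eq {Ω M : Type*} [Fintype Ω] [AddCommGroup M] (X : ℕ → Ω → M)
    (τ : Ω → ℕ) (N : ℕ) :
    ∑ ω, X (min (τ ω) N) ω = ∑ ω, X 0 ω +
      ∑ k ∈ range N, (∑ ω with k < τ ω, X (k + 1) ω - ∑ ω with k < τ ω, X k ω) := by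
  induction N with
  | zero => simp
  | succ N ih =>
    have step : ∀ ω, X (min (τ ω) (N + 1)) ω =
        X (min (τ ω) N) ω + if N < τ ω then X (N + 1) ω - X N ω else 0 := by
      intro ω
      split_ifs with h
      · rw [min_eq_right h, min_eq_right h.le, add_sub_cancel]
      · rw [min_eq_left (by omega), min_eq_left (by omega), add_zero]
    rw [sum_range_succ, ← add_assoc, ← ih, ← sum_sub_distrib, sum_filter, ← sum_add_distrib]
    exact sum_congr rfl fun ω _ => step ω

theorem integral_smul_count_mono {Ω : Type*} [Fintype Ω] [MeasurableSpace Ω]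
    [MeasurableSingletonClass Ω] (c : ℝ≥0∞) {f g : Ω → ℝ} (h : ∑ ω, f ω ≤ ∑ ω, g ω) :
    ∫ ω, f ω ∂(c • Measure.count) ≤ ∫ ω, g ω ∂(c • Measure.count) := by
  simp only [integral_smul_measure, integral_count, smul_eq_mul]
  exact mul_le_mul_of_nonneg_left h ENNReal.toReal_nonneg

theorem measurable_iSup_comap_eval_iff {ι α Z : Type*} [Finite ι] [Countable α]
    [MeasurableSpace Z] [MeasurableSingletonClass Z] (s : Set ι) {f : (ι → α) → Z} :
    Measurable[⨆ i : s, MeasurableSpace.comap (fun ω : ι → α => ω i) ⊤] f ↔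
      DependsOn f s := by
  let _ : MeasurableSpace α := ⊤
  have hcomap : (⨆ i : s, MeasurableSpace.comap (fun ω : ι → α => ω i) ⊤) =
      MeasurableSpace.comap s.domRestrict MeasurableSpace.pi := by
    rw [MeasurableSpace.pi, MeasurableSpace.comap_iSup]
    simp_rw [MeasurableSpace.comap_comp]
    rfl
  rw [hcomap, dependsOn_iff_factorsThrough]
  refine ⟨Measurable.factorsThrough, fun hf t _ => ?_⟩
  refine ⟨s.domRestrict '' (f ⁻¹' t), .of_discrete, Set.ext fun ω => ⟨?_, fun hω => ⟨ω, hω, rfl⟩⟩⟩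
  rintro ⟨ω', hω', heq⟩
  rwa [Set.mem_preimage, ← hf heq]

theorem isStoppingTime_iff_dependsOn {ι α : Type*} [Finite ι] [Countable α]
    (p : ℕ → ι → Prop) {ℱ : Filtration ℕ (⊤ : MeasurableSpace (ι → α))}
    (hℱ : ∀ k, (ℱ k : MeasurableSpace (ι → α)) =
      ⨆ i : {i // p k i}, MeasurableSpace.comap (fun ω => ω i.1) ⊤)
    (τ : (ι → α) → ℕ) :
    IsStoppingTime ℱ (fun ω => (τ ω : WithTop ℕ)) ↔
      ∀ k, DependsOn (fun ω => τ ω ≤ k) {i | p k i} := by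
  refine forall_congr' fun k => ?_
  simp only [Nat.cast_withTop, WithTop.coe_le_coe]
  rw [@measurableSet_setOfPred _ (ℱ k), hℱ k]
  exact measurable_iSup_comap_eval_iff {i | p k i}

theorem _root_.DependsOn.comp_update {n : ℕ} {α β : Type*} {f : (Fin n → α) → β} {k : Fin n}
    (hf : DependsOn f {i | (i : ℕ) < k + 1}) (a : α) :
    DependsOn (fun ω => f (update ω k a)) {i | (i : ℕ) < k} := by
  intro ω ω' h
  refine hf fun i hi => ?_
  rcases eq_or_ne i k with rfl | hik
  · simp
  · rw [update_of_ne hik, update_of_ne hik]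
    exact h i (lt_of_le_of_ne (Nat.lt_succ_iff.1 hi) (Fin.val_ne_of_ne hik))

section ValueFunction

variable {n d : ℕ} (wn : Fin (d + 1) → Fin d → ℝ) (K : Set (Fin d → ℝ))
  (Y : ℕ → (Fin n → Fin (d + 1)) → ℝ) (H : ℕ → ℝ → (Fin n → Fin (d + 1)) → ℝ)

/-- `(d + 1)` times the conditional expectation of `H_{k+1}` after investing the fractions `u`
of the wealth `y` at step `k`. -/
noncomputable def nextSum (k : Fin n) (y : ℝ) (u : Fin d → ℝ) (ω : Fin n → Fin (d + 1)) : ℝ :=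
  ∑ i, H (k + 1 : ℕ) (y * (1 + ∑ j, u j * wn i j)) (update ω k i)

noncomputable def contValue (k : Fin n) (y : ℝ) (ω : Fin n → Fin (d + 1)) : ℝ :=
  sInf {z | ∃ u ∈ K, z = nextSum wn H k y u ω}

structure IsShortfallValue : Prop where
  terminal : ∀ y ω, H n y ω = max (Y n ω - y) 0
  step : ∀ k (hk : k < n), ∀ y ω,
    H k y ω = max (max (Y k ω - y) 0) (1 / (d + 1 : ℝ) * contValue wn K H ⟨k, hk⟩ y ω)

variable {wn K Y H}

theorem contValue_eq_sInf_image (k : Fin n) (y : ℝ) (ω : Fin n → Fin (d + 1)) :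
    contValue wn K H k y ω = sInf ((fun u => nextSum wn H k y u ω) '' K) := by
  simp only [contValue, Set.image, eq_comm]

theorem nextSum_dependsOn {k : Fin n}
    (hH : ∀ y, DependsOn (H (k + 1 : ℕ) y) {i | (i : ℕ) < k + 1})
    (y : ℝ) (u : Fin d → ℝ) : DependsOn (nextSum wn H k y u) {i | (i : ℕ) < k} :=
  fun _ _ h => sum_congr rfl fun i _ => (hH _).comp_update i h

theorem contValue_dependsOn {k : Fin n}
    (hH : ∀ y, DependsOn (H (k + 1 : ℕ) y) {i | (i : ℕ) < k + 1}) (y : ℝ) :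
    DependsOn (contValue wn K H k y) {i | (i : ℕ) < k} := by
  intro ω ω' h
  have e : ∀ u, nextSum wn H k y u ω = nextSum wn H k y u ω' := fun u =>
    nextSum_dependsOn hH y u h
  simp only [contValue, e]

namespace IsShortfallValue

variable (hH : IsShortfallValue wn K Y H)
include hH

theorem payoff_le {k : ℕ} (hk : k ≤ n) (y : ℝ) (ω : Fin n → Fin (d + 1)) :
    max (Y k ω - y) 0 ≤ H k y ω := by
  rcases hk.eq_or_lt with rfl | hk
  · rw [hH.terminal]
  · rw [hH.step k hk]
    exact le_max_left _ _

theorem nonneg {k : ℕ} (hk : k ≤ n) (y : ℝ) (ω : Fin n → Fin (d + 1)) : 0 ≤ H k y ω :=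
  (le_max_right _ _).trans (hH.payoff_le hk y ω)

theorem contValue_le_nextSum (k : Fin n) (y : ℝ) {u : Fin d → ℝ} (hu : u ∈ K)
    (ω : Fin n → Fin (d + 1)) : contValue wn K H k y ω ≤ nextSum wn H k y u ω :=
  csInf_le ⟨0, by rintro _ ⟨v, -, rfl⟩; exact sum_nonneg fun i _ => hH.nonneg k.2 _ _⟩
    ⟨u, hu, rfl⟩

theorem contValue_le_mul {k : ℕ} (hk : k < n) (y : ℝ) (ω : Fin n → Fin (d + 1)) :
    contValue wn K H ⟨k, hk⟩ y ω ≤ (d + 1) * H k y ω := by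
  have h : 1 / (d + 1 : ℝ) * contValue wn K H ⟨k, hk⟩ y ω ≤ H k y ω :=
    (le_max_right _ _).trans_eq (hH.step k hk y ω).symm
  rw [one_div, inv_mul_le_iff₀ (by positivity)] at h
  exact h

theorem mul_le_nextSum_of_payoff_lt {k : ℕ} (hk : k < n) {y : ℝ} {ω : Fin n → Fin (d + 1)}
    (hlt : max (Y k ω - y) 0 < H k y ω) {u : Fin d → ℝ} (hu : u ∈ K) :
    (d + 1) * H k y ω ≤ nextSum wn H ⟨k, hk⟩ y u ω := by
  rw [hH.step k hk] at hlt ⊢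
  rw [max_eq_right (lt_max_iff.1 hlt |>.resolve_left (lt_irrefl _)).le, one_div,
    mul_inv_cancel_left₀ (by positivity)]
  exact hH.contValue_le_nextSum _ y hu ω

theorem dependsOn (hY : ∀ k ≤ n, DependsOn (Y k) {i | (i : ℕ) < k}) {k : ℕ} (hk : k ≤ n)
    (y : ℝ) : DependsOn (H k y) {i | (i : ℕ) < k} := by
  induction hk using Nat.decreasingInduction generalizing y with
  | self =>
    intro ω ω' h
    rw [hH.terminal, hH.terminal, hY n le_rfl h]
  | of_succ k hk ih =>
    intro ω ω' h
    rw [hH.step k hk, hH.step k hk, hY k hk.le h, contValue_dependsOn ih y h]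

theorem antitone (hK : ∀ u ∈ K, ∀ i, 0 ≤ 1 + ∑ j, u j * wn i j) (hKne : K.Nonempty)
    {k : ℕ} (hk : k ≤ n) (ω : Fin n → Fin (d + 1)) : Antitone fun y => H k y ω := by
  induction hk using Nat.decreasingInduction generalizing ω with
  | self =>
    intro y y' hyy
    simp only [hH.terminal]
    gcongr
  | of_succ k hk ih =>
    intro y y' hyy
    simp only [hH.step k hk]
    refine max_le_max (max_le_max (by linarith) le_rfl)
      (mul_le_mul_of_nonneg_left ?_ (by positivity))
    obtain ⟨u₀, hu₀⟩ := hKne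
    refine le_csInf ⟨_, u₀, hu₀, rfl⟩ ?_
    rintro _ ⟨u, hu, rfl⟩
    exact (hH.contValue_le_nextSum _ y' hu ω).trans
      (sum_le_sum fun i _ => ih _ (mul_le_mul_of_nonneg_right hyy (hK u hu i)))

theorem continuous (hKc : IsCompact K) {k : ℕ} (hk : k ≤ n) (ω : Fin n → Fin (d + 1)) :
    Continuous fun y => H k y ω := by
  induction hk using Nat.decreasingInduction generalizing ω with
  | self =>
    simp only [hH.terminal]
    fun_prop
  | of_succ k hk ih =>
    simp only [hH.step k hk, contValue_eq_sInf_image]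
    refine (by fun_prop : Continuous fun y => max (Y k ω - y) 0).max
      (continuous_const.mul (hKc.continuous_sInf ?_))
    show Continuous fun p : ℝ × (Fin d → ℝ) => nextSum wn H ⟨k, hk⟩ p.1 p.2 ω
    exact continuous_finsetSum _ fun i _ => (ih _).comp (by fun_prop)

theorem exists_nextSum_eq_contValue (hKc : IsCompact K) (hKne : K.Nonempty) (k : Fin n)
    (y : ℝ) (ω : Fin n → Fin (d + 1)) :
    ∃ u ∈ K, nextSum wn H k y u ω = contValue wn K H k y ω := by
  have hcont : Continuous fun u => nextSum wn H k y u ω :=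
    continuous_finsetSum _ fun i _ => (hH.continuous hKc k.2 _).comp (by fun_prop)
  obtain ⟨u, hu, hmin⟩ := hKc.exists_isMinOn hKne hcont.continuousOn
  refine ⟨u, hu, le_antisymm ?_ (hH.contValue_le_nextSum k y hu ω)⟩
  refine le_csInf ⟨_, u, hu, rfl⟩ ?_
  rintro _ ⟨v, hv, rfl⟩
  exact hmin hv

end IsShortfallValue

end ValueFunction

section Strategy

variable {n d : ℕ} {wn : Fin (d + 1) → Fin d → ℝ} {H : ℕ → ℝ → (Fin n → Fin (d + 1)) → ℝ}

variable (wn) in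
structure IsSelfFinancing (ρ : ℕ → (Fin n → Fin (d + 1)) → Fin d → ℝ)
    (V : ℕ → (Fin n → Fin (d + 1)) → ℝ) : Prop where
  initial : ∀ ω ω', V 0 ω = V 0 ω'
  adapted : ∀ k, DependsOn (ρ k) {i | (i : ℕ) < k}
  wealth_succ : ∀ k (hk : k < n), ∀ ω,
    V (k + 1) ω = V k ω * (1 + ∑ j, ρ k ω j * wn (ω ⟨k, hk⟩) j)

namespace IsSelfFinancing

variable {ρ : ℕ → (Fin n → Fin (d + 1)) → Fin d → ℝ} {V : ℕ → (Fin n → Fin (d + 1)) → ℝ}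
  (hπ : IsSelfFinancing wn ρ V)
include hπ

theorem wealth_dependsOn {k : ℕ} (hk : k ≤ n) : DependsOn (V k) {i | (i : ℕ) < k} := by
  induction k with
  | zero => exact fun ω ω' _ => hπ.initial ω ω'
  | succ k ih =>
    intro ω ω' h
    have h' : ∀ i ∈ {i : Fin n | (i : ℕ) < k}, ω i = ω' i := fun i hi =>
      h i (Nat.lt_succ_of_lt hi)
    rw [hπ.wealth_succ k hk, hπ.wealth_succ k hk, ih (Nat.le_of_succ_le hk) h',
      hπ.adapted k h', h ⟨k, hk⟩ (Nat.lt_succ_self k)]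

theorem mul_sum_succ_eq_sum_nextSum {k : ℕ} (hk : k < n) {τ : (Fin n → Fin (d + 1)) → ℕ}
    (hτ : DependsOn (fun ω => τ ω ≤ k) {i | (i : ℕ) < k}) :
    (d + 1 : ℝ) * ∑ ω with k < τ ω, H (k + 1) (V (k + 1) ω) ω =
      ∑ ω with k < τ ω, nextSum wn H ⟨k, hk⟩ (V k ω) (ρ k ω) ω := by
  have hpast : ∀ (ω : Fin n → Fin (d + 1)) (a : Fin (d + 1)), ∀ i ∈ {i : Fin n | (i : ℕ) < k},
      update ω ⟨k, hk⟩ a i = ω i :=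
    fun ω a i (hi : (i : ℕ) < k) => update_of_ne (Fin.ne_of_val_ne (Nat.ne_of_lt hi)) _ _
  have hshift : ∀ (ω : Fin n → Fin (d + 1)) (a : Fin (d + 1)),
      (if k < τ (update ω ⟨k, hk⟩ a) then
        H (k + 1) (V (k + 1) (update ω ⟨k, hk⟩ a)) (update ω ⟨k, hk⟩ a) else 0) =
      if k < τ ω then
        H (k + 1) (V k ω * (1 + ∑ j, ρ k ω j * wn a j)) (update ω ⟨k, hk⟩ a) else 0 := by
    intro ω a
    rw [hπ.wealth_succ k hk, hπ.wealth_dependsOn hk.le (hpast ω a), hπ.adapted k (hpast ω a),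
      update_self]
    simp only [← not_le, hτ (hpast ω a)]
  have hupdate := sum_sum_update ⟨k, hk⟩ fun ω =>
    if k < τ ω then H (k + 1) (V (k + 1) ω) ω else (0 : ℝ)
  rw [Fintype.card_fin, nsmul_eq_mul, Nat.cast_add_one] at hupdate
  rw [sum_filter, sum_filter, ← hupdate]
  refine sum_congr rfl fun ω _ => ?_
  simp only [hshift]
  split_ifs <;> simp only [nextSum, sum_const_zero]

end IsSelfFinancing

end Strategy

section LowerBound

variable {n d : ℕ} {wn : Fin (d + 1) → Fin d → ℝ} {K : Set (Fin d → ℝ)}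
  {Y : ℕ → (Fin n → Fin (d + 1)) → ℝ} {H : ℕ → ℝ → (Fin n → Fin (d + 1)) → ℝ}
  {ρ : ℕ → (Fin n → Fin (d + 1)) → Fin d → ℝ} {V : ℕ → (Fin n → Fin (d + 1)) → ℝ}

variable (Y H V) in
def IsExerciseTime (j : ℕ) (ω : Fin n → Fin (d + 1)) : Prop :=
  n ≤ j ∨ H j (V j ω) ω ≤ max (Y j ω - V j ω) 0

theorem exists_isExerciseTime (ω : Fin n → Fin (d + 1)) : ∃ j, IsExerciseTime Y H V j ω :=
  ⟨n, Or.inl le_rfl⟩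

variable (Y H V) in
open Classical in
noncomputable def optimalStop (ω : Fin n → Fin (d + 1)) : ℕ :=
  Nat.find (exists_isExerciseTime (Y := Y) (H := H) (V := V) ω)

theorem optimalStop_le (ω : Fin n → Fin (d + 1)) : optimalStop Y H V ω ≤ n := by
  classical
  exact Nat.find_min' _ (Or.inl le_rfl)

theorem IsShortfallValue.eq_payoff_optimalStop (hH : IsShortfallValue wn K Y H)
    (ω : Fin n → Fin (d + 1)) :
    H (optimalStop Y H V ω) (V (optimalStop Y H V ω) ω) ω =
      max (Y (optimalStop Y H V ω) ω - V (optimalStop Y H V ω) ω) 0 := by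
  classical
  rcases Nat.find_spec (exists_isExerciseTime (Y := Y) (H := H) (V := V) ω) with hn | hle
  · have hτ : optimalStop Y H V ω = n := le_antisymm (optimalStop_le ω) hn
    rw [hτ, hH.terminal]
  · exact le_antisymm hle (hH.payoff_le (optimalStop_le ω) _ ω)

theorem payoff_lt_of_lt_optimalStop {k : ℕ} {ω : Fin n → Fin (d + 1)}
    (hk : k < optimalStop Y H V ω) : max (Y k ω - V k ω) 0 < H k (V k ω) ω := by
  classical
  have := Nat.find_min (exists_isExerciseTime ω) hk
  simp only [IsExerciseTime, not_or, not_le] at this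
  exact this.2

theorem IsShortfallValue.optimalStop_le_dependsOn (hH : IsShortfallValue wn K Y H)
    (hY : ∀ k ≤ n, DependsOn (Y k) {i | (i : ℕ) < k}) (hπ : IsSelfFinancing wn ρ V) (k : ℕ) :
    DependsOn (fun ω => optimalStop Y H V ω ≤ k) {i | (i : ℕ) < k} := by
  classical
  intro ω ω' h
  simp only [optimalStop, Nat.find_le_iff, eq_iff_iff]
  refine exists_congr fun j => and_congr_right fun hj => ?_
  unfold IsExerciseTime
  rcases le_or_gt n j with hn | hn
  · simp only [hn, true_or]
  have h' : ∀ i ∈ {i : Fin n | (i : ℕ) < j}, ω i = ω' i := fun i hi => h i (lt_of_lt_of_le hi hj)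
  rw [hπ.wealth_dependsOn hn.le h', hY j hn.le h', hH.dependsOn hY hn.le _ h']

theorem IsShortfallValue.exists_stop_sum_le (hH : IsShortfallValue wn K Y H)
    (hY : ∀ k ≤ n, DependsOn (Y k) {i | (i : ℕ) < k}) (hπ : IsSelfFinancing wn ρ V)
    (hρK : ∀ k ω, ρ k ω ∈ K) :
    ∃ τ : (Fin n → Fin (d + 1)) → ℕ, (∀ k, DependsOn (fun ω => τ ω ≤ k) {i | (i : ℕ) < k}) ∧
      (∀ ω, τ ω ≤ n) ∧
      ∑ ω, H 0 (V 0 ω) ω ≤ ∑ ω, max (Y (τ ω) ω - V (τ ω) ω) 0 := by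
  refine ⟨optimalStop Y H V, hH.optimalStop_le_dependsOn hY hπ, optimalStop_le, ?_⟩
  calc ∑ ω, H 0 (V 0 ω) ω
      ≤ ∑ ω, H (min (optimalStop Y H V ω) n) (V (min (optimalStop Y H V ω) n) ω) ω := by
        rw [sum_min_stop_eq (fun k ω => H k (V k ω) ω)]
        refine le_add_of_nonneg_right (sum_nonneg fun k hk => sub_nonneg.2 ?_)
        have hk : k < n := mem_range.1 hk
        refine le_of_mul_le_mul_left ?_ (by positivity : (0 : ℝ) < d + 1)
        rw [hπ.mul_sum_succ_eq_sum_nextSum hk (hH.optimalStop_le_dependsOn hY hπ k), mul_sum]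
        exact sum_le_sum fun ω hω => hH.mul_le_nextSum_of_payoff_lt hk
          (payoff_lt_of_lt_optimalStop (mem_filter.1 hω).2) (hρK k ω)
    _ = ∑ ω, max (Y (optimalStop Y H V ω) ω - V (optimalStop Y H V ω) ω) 0 :=
        sum_congr rfl fun ω _ => by
          rw [min_eq_left (optimalStop_le ω), hH.eq_payoff_optimalStop]

end LowerBound

section UpperBound

variable {n d : ℕ} {wn : Fin (d + 1) → Fin d → ℝ} {K : Set (Fin d → ℝ)}
  {Y : ℕ → (Fin n → Fin (d + 1)) → ℝ} {H : ℕ → ℝ → (Fin n → Fin (d + 1)) → ℝ}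

theorem IsShortfallValue.sum_stop_le (hH : IsShortfallValue wn K Y H)
    {ρ : ℕ → (Fin n → Fin (d + 1)) → Fin d → ℝ} {V : ℕ → (Fin n → Fin (d + 1)) → ℝ}
    (hπ : IsSelfFinancing wn ρ V)
    (hmin : ∀ k (hk : k < n), ∀ ω,
      nextSum wn H ⟨k, hk⟩ (V k ω) (ρ k ω) ω = contValue wn K H ⟨k, hk⟩ (V k ω) ω)
    {τ : (Fin n → Fin (d + 1)) → ℕ} (hτ : ∀ k, DependsOn (fun ω => τ ω ≤ k) {i | (i : ℕ) < k})
    (hτn : ∀ ω, τ ω ≤ n) :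
    ∑ ω, max (Y (τ ω) ω - V (τ ω) ω) 0 ≤ ∑ ω, H 0 (V 0 ω) ω :=
  calc ∑ ω, max (Y (τ ω) ω - V (τ ω) ω) 0
      ≤ ∑ ω, H (min (τ ω) n) (V (min (τ ω) n) ω) ω :=
        sum_le_sum fun ω _ => by rw [min_eq_left (hτn ω)]; exact hH.payoff_le (hτn ω) _ ω
    _ ≤ ∑ ω, H 0 (V 0 ω) ω := by
        rw [sum_min_stop_eq (fun k ω => H k (V k ω) ω)]
        refine add_le_of_nonpos_right (sum_nonpos fun k hk => sub_nonpos.2 ?_)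
        have hk : k < n := mem_range.1 hk
        refine le_of_mul_le_mul_left ?_ (by positivity : (0 : ℝ) < d + 1)
        rw [hπ.mul_sum_succ_eq_sum_nextSum hk (hτ k), mul_sum]
        exact sum_le_sum fun ω _ => (hmin k hk ω).trans_le (hH.contValue_le_mul hk _ ω)

variable (wn K H) in
/-- `Classical.epsilon` of a predicate that depends only on the first `k` coordinates of `ω`
yields an adapted selection. -/
noncomputable def optimalControl (k : ℕ) (y : ℝ) (ω : Fin n → Fin (d + 1)) : Fin d → ℝ :=
  Classical.epsilon fun u => u ∈ K ∧
    ∀ hk : k < n, nextSum wn H ⟨k, hk⟩ y u ω = contValue wn K H ⟨k, hk⟩ y ω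

theorem IsShortfallValue.optimalControl_spec (hH : IsShortfallValue wn K Y H)
    (hKc : IsCompact K) (hKne : K.Nonempty) (k : ℕ) (y : ℝ) (ω : Fin n → Fin (d + 1)) :
    optimalControl wn K H k y ω ∈ K ∧ ∀ hk : k < n,
      nextSum wn H ⟨k, hk⟩ y (optimalControl wn K H k y ω) ω = contValue wn K H ⟨k, hk⟩ y ω := by
  have hex : ∃ u ∈ K, ∀ hk : k < n,
      nextSum wn H ⟨k, hk⟩ y u ω = contValue wn K H ⟨k, hk⟩ y ω := by
    by_cases hk : k < n
    · obtain ⟨u, hu, hmin⟩ := hH.exists_nextSum_eq_contValue hKc hKne ⟨k, hk⟩ y ω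
      exact ⟨u, hu, fun _ => hmin⟩
    · obtain ⟨u, hu⟩ := hKne
      exact ⟨u, hu, fun hk' => absurd hk' hk⟩
  exact Classical.epsilon_spec hex

theorem IsShortfallValue.optimalControl_dependsOn (hH : IsShortfallValue wn K Y H)
    (hY : ∀ k ≤ n, DependsOn (Y k) {i | (i : ℕ) < k}) (k : ℕ) (y : ℝ) :
    DependsOn (optimalControl wn K H k y) {i | (i : ℕ) < k} := by
  intro ω ω' h
  have hsucc : ∀ hk : k < n, ∀ y, DependsOn (H (k + 1) y) {i | (i : ℕ) < k + 1} :=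
    fun hk => hH.dependsOn hY hk
  have hnext : ∀ (hk : k < n) u, nextSum wn H ⟨k, hk⟩ y u ω = nextSum wn H ⟨k, hk⟩ y u ω' :=
    fun hk u => nextSum_dependsOn (hsucc hk) y u h
  have hcont : ∀ hk : k < n, contValue wn K H ⟨k, hk⟩ y ω = contValue wn K H ⟨k, hk⟩ y ω' :=
    fun hk => contValue_dependsOn (hsucc hk) y h
  simp only [optimalControl, hnext, hcont]

variable (wn) in
noncomputable def controlledWealth (c : ℕ → ℝ → (Fin n → Fin (d + 1)) → Fin d → ℝ) (x : ℝ) :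
    ℕ → (Fin n → Fin (d + 1)) → ℝ
  | 0, _ => x
  | k + 1, ω =>
    if hk : k < n then
      controlledWealth c x k ω *
        (1 + ∑ j, c k (controlledWealth c x k ω) ω j * wn (ω ⟨k, hk⟩) j)
    else controlledWealth c x k ω

theorem isSelfFinancing_controlledWealth {c : ℕ → ℝ → (Fin n → Fin (d + 1)) → Fin d → ℝ}
    (hc : ∀ k y, DependsOn (c k y) {i | (i : ℕ) < k}) (x : ℝ) :
    IsSelfFinancing wn (fun k ω => c k (controlledWealth wn c x k ω) ω)
      (controlledWealth wn c x) := by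
  have hV : ∀ k, DependsOn (controlledWealth wn c x k) {i | (i : ℕ) < k} := by
    intro k
    induction k with
    | zero => exact fun _ _ _ => rfl
    | succ k ih =>
      intro ω ω' h
      have h' : ∀ i ∈ {i : Fin n | (i : ℕ) < k}, ω i = ω' i := fun i hi =>
        h i (Nat.lt_succ_of_lt hi)
      simp only [controlledWealth, ih h', hc k _ h']
      split_ifs with hk
      · rw [h ⟨k, hk⟩ (Nat.lt_succ_self k)]
      · rfl
  refine ⟨fun _ _ => rfl, fun k ω ω' h => ?_, fun k hk ω => ?_⟩
  · simp only [hV k h, hc k _ h]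
  · simp only [controlledWealth, dif_pos hk]

end UpperBound

end MultinomialShortfall

open MultinomialShortfall

theorem stmt_19_general (d n : ℕ) (x : ℝ)
    (wn : Fin (d + 1) → Fin d → ℝ)
    (K : Set (Fin d → ℝ)) (hK : K = {u | ∀ i, -1 ≤ ∑ j, u j * wn i j})
    (hKne : K.Nonempty) (hKcomp : IsCompact K)
    (μ : Measure (Fin n → Fin (d + 1)))
    (hμ : μ = (((d : ℝ≥0∞) + 1) ^ n)⁻¹ • Measure.count)
    (ℱ : Filtration ℕ (⊤ : MeasurableSpace (Fin n → Fin (d + 1))))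
    (hℱ : ∀ k, (ℱ k : MeasurableSpace (Fin n → Fin (d + 1))) =
      ⨆ i : {i : Fin n // (i : ℕ) < k}, MeasurableSpace.comap (fun ω => ω i.1) ⊤)
    (Y : ℕ → (Fin n → Fin (d + 1)) → ℝ)
    (hYad : ∀ k, k ≤ n → ∀ ω ω',
      (∀ i : Fin n, (i : ℕ) < k → ω i = ω' i) → Y k ω = Y k ω')
    (H : ℕ → ℝ → (Fin n → Fin (d + 1)) → ℝ)
    (hHn : ∀ y ω, H n y ω = max (Y n ω - y) 0)
    (hHk : ∀ k (hk : k < n), ∀ y ω, H k y ω =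
      max (max (Y k ω - y) 0)
        ((1 / (d + 1 : ℝ)) * sInf {z : ℝ | ∃ u ∈ K, z =
          ∑ i : Fin (d + 1), H (k + 1) (y * (1 + ∑ j, u j * wn i j))
            (Function.update ω ⟨k, hk⟩ i)})) :
    -- every admissible strategy with initial capital ≤ x has shortfall risk ≥ H₀(x)
    (∀ (ρ : ℕ → (Fin n → Fin (d + 1)) → Fin d → ℝ)
        (V : ℕ → (Fin n → Fin (d + 1)) → ℝ),
      (∀ k, Measurable[ℱ k] (ρ k)) → (∀ k ω, ρ k ω ∈ K) →
      (∃ x₀ : ℝ, x₀ ≤ x ∧ ∀ ω, V 0 ω = x₀) →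
      (∀ k (hk : k < n), ∀ ω,
        V (k + 1) ω = V k ω * (1 + ∑ j, ρ k ω j * wn (ω ⟨k, hk⟩) j)) →
      ∃ τ : (Fin n → Fin (d + 1)) → ℕ, IsStoppingTime ℱ (fun ω => (τ ω : WithTop ℕ)) ∧ (∀ ω, τ ω ≤ n) ∧
        H 0 x (fun _ => 0) ≤ ∫ ω, max (Y (τ ω) ω - V (τ ω) ω) 0 ∂μ) ∧
    -- the strategy built from stepwise minimizers attains H₀(x)
    (∃ (ρ : ℕ → (Fin n → Fin (d + 1)) → Fin d → ℝ)
        (V : ℕ → (Fin n → Fin (d + 1)) → ℝ),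
      (∀ k, Measurable[ℱ k] (ρ k)) ∧ (∀ k ω, ρ k ω ∈ K) ∧
      (∀ ω, V 0 ω = x) ∧
      (∀ k (hk : k < n), ∀ ω,
        V (k + 1) ω = V k ω * (1 + ∑ j, ρ k ω j * wn (ω ⟨k, hk⟩) j)) ∧
      (∀ k (hk : k < n), ∀ ω,
        (∑ i : Fin (d + 1), H (k + 1) (V k ω * (1 + ∑ j, ρ k ω j * wn i j))
            (Function.update ω ⟨k, hk⟩ i)) =
          sInf {z : ℝ | ∃ u ∈ K, z =
            ∑ i : Fin (d + 1), H (k + 1) (V k ω * (1 + ∑ j, u j * wn i j))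
              (Function.update ω ⟨k, hk⟩ i)}) ∧
      ∀ τ : (Fin n → Fin (d + 1)) → ℕ, IsStoppingTime ℱ (fun ω => (τ ω : WithTop ℕ)) → (∀ ω, τ ω ≤ n) →
        ∫ ω, max (Y (τ ω) ω - V (τ ω) ω) 0 ∂μ ≤ H 0 x (fun _ => 0)) := by
  have hH : IsShortfallValue wn K Y H := ⟨hHn, hHk⟩
  have hY : ∀ k ≤ n, DependsOn (Y k) {i | (i : ℕ) < k} := fun k hk _ _ h => hYad k hk _ _ h
  have hgrowth : ∀ u ∈ K, ∀ i, 0 ≤ 1 + ∑ j, u j * wn i j := fun u hu i => by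
    rw [hK] at hu
    linarith [hu i]
  have hadapted : ∀ k (f : (Fin n → Fin (d + 1)) → Fin d → ℝ),
      Measurable[ℱ k] f ↔ DependsOn f {i | (i : ℕ) < k} := fun k f => by
    rw [hℱ k]; exact measurable_iSup_comap_eval_iff _
  have hstopping := isStoppingTime_iff_dependsOn (fun k (i : Fin n) => (i : ℕ) < k) hℱ
  have hmono : ∀ {f g : (Fin n → Fin (d + 1)) → ℝ},
      ∑ ω, f ω ≤ ∑ ω, g ω → ∫ ω, f ω ∂μ ≤ ∫ ω, g ω ∂μ := fun h =>
    hμ ▸ integral_smul_count_mono _ h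
  have : IsProbabilityMeasure μ := ⟨by simp [hμ, ENNReal.inv_mul_cancel]⟩
  have hH₀ : ∀ y, ∫ ω, H 0 y ω ∂μ = H 0 y (fun _ => 0) := fun y => by
    have hconst : ∀ ω, H 0 y ω = H 0 y (fun _ => 0) := fun ω =>
      hH.dependsOn hY n.zero_le y fun i hi => absurd hi (Nat.not_lt_zero _)
    simp [hconst]
  refine ⟨fun ρ V hρ hρK ⟨x₀, hx₀, hV₀⟩ hV => ?_, ?_⟩
  · have hπ : IsSelfFinancing wn ρ V :=
      ⟨fun ω ω' => (hV₀ ω).trans (hV₀ ω').symm, fun k => (hadapted k _).1 (hρ k), hV⟩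
    obtain ⟨τ, hτ, hτn, hsum⟩ := hH.exists_stop_sum_le hY hπ hρK
    refine ⟨τ, (hstopping τ).2 hτ, hτn, (hH₀ x).symm.trans_le ?_⟩
    refine (hmono (sum_le_sum fun ω _ => ?_)).trans (hmono hsum)
    rw [hV₀]
    exact hH.antitone hgrowth hKne n.zero_le ω hx₀
  · have hc := hH.optimalControl_spec hKcomp hKne
    have hπ := isSelfFinancing_controlledWealth (wn := wn) (hH.optimalControl_dependsOn hY) x
    refine ⟨_, _, fun k => (hadapted k _).2 (hπ.adapted k), fun k ω => (hc k _ ω).1,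
      fun _ => rfl, hπ.wealth_succ, fun k hk ω => (hc k _ ω).2 hk, fun τ hτ hτn => ?_⟩
    rw [← hH₀]
    exact hmono (hH.sum_stop_le hπ (fun k hk ω => (hc k _ ω).2 hk) ((hstopping τ).1 hτ) hτn)

/-- Dynamic programming for the shortfall risk in the `n`-step multinomial market:
every admissible strategy with initial capital at most `x` has shortfall risk at
least `H⁽ⁿ⁾₀(x)`, and a strategy built from stepwise minimizers attains
`H⁽ⁿ⁾₀(x)`; hence `Rₙ(x) = H⁽ⁿ⁾₀(x)`. -/
theorem stmt_19 (d n : ℕ) (hn : 0 < n) (T x : ℝ) (hT : 0 < T) (hx : 0 < x)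
    (w : Fin (d + 1) → Fin d → ℝ) (b : Fin d → ℝ) (σm : Matrix (Fin d) (Fin d) ℝ)
    (wn : Fin (d + 1) → Fin d → ℝ)
    (hwn : ∀ i j, wn i j = T / n * b j + Real.sqrt (T / n) * ∑ l, σm j l * w i l)
    (K : Set (Fin d → ℝ)) (hK : K = {u | ∀ i, -1 ≤ ∑ j, u j * wn i j})
    (hKne : K.Nonempty) (hKcomp : IsCompact K) (hKconv : Convex ℝ K)
    (μ : Measure (Fin n → Fin (d + 1)))
    (hμ : μ = (((d : ℝ≥0∞) + 1) ^ n)⁻¹ • Measure.count)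
    (ℱ : Filtration ℕ (⊤ : MeasurableSpace (Fin n → Fin (d + 1))))
    (hℱ : ∀ k, (ℱ k : MeasurableSpace (Fin n → Fin (d + 1))) =
      ⨆ i : {i : Fin n // (i : ℕ) < k}, MeasurableSpace.comap (fun ω => ω i.1) ⊤)
    (Y : ℕ → (Fin n → Fin (d + 1)) → ℝ) (hYpos : ∀ k ω, 0 ≤ Y k ω)
    (hYad : ∀ k, k ≤ n → ∀ ω ω',
      (∀ i : Fin n, (i : ℕ) < k → ω i = ω' i) → Y k ω = Y k ω')
    (H : ℕ → ℝ → (Fin n → Fin (d + 1)) → ℝ)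
    (hHn : ∀ y ω, H n y ω = max (Y n ω - y) 0)
    (hHk : ∀ k (hk : k < n), ∀ y ω, H k y ω =
      max (max (Y k ω - y) 0)
        ((1 / (d + 1 : ℝ)) * sInf {z : ℝ | ∃ u ∈ K, z =
          ∑ i : Fin (d + 1), H (k + 1) (y * (1 + ∑ j, u j * wn i j))
            (Function.update ω ⟨k, hk⟩ i)})) :
    -- every admissible strategy with initial capital ≤ x has shortfall risk ≥ H₀(x)
    (∀ (ρ : ℕ → (Fin n → Fin (d + 1)) → Fin d → ℝ)
        (V : ℕ → (Fin n → Fin (d + 1)) → ℝ),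
      (∀ k, Measurable[ℱ k] (ρ k)) → (∀ k ω, ρ k ω ∈ K) →
      (∃ x₀ : ℝ, x₀ ≤ x ∧ ∀ ω, V 0 ω = x₀) →
      (∀ k (hk : k < n), ∀ ω,
        V (k + 1) ω = V k ω * (1 + ∑ j, ρ k ω j * wn (ω ⟨k, hk⟩) j)) →
      ∃ τ : (Fin n → Fin (d + 1)) → ℕ, IsStoppingTime ℱ (fun ω => (τ ω : WithTop ℕ)) ∧ (∀ ω, τ ω ≤ n) ∧
        H 0 x (fun _ => 0) ≤ ∫ ω, max (Y (τ ω) ω - V (τ ω) ω) 0 ∂μ) ∧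
    -- the strategy built from stepwise minimizers attains H₀(x)
    (∃ (ρ : ℕ → (Fin n → Fin (d + 1)) → Fin d → ℝ)
        (V : ℕ → (Fin n → Fin (d + 1)) → ℝ),
      (∀ k, Measurable[ℱ k] (ρ k)) ∧ (∀ k ω, ρ k ω ∈ K) ∧
      (∀ ω, V 0 ω = x) ∧
      (∀ k (hk : k < n), ∀ ω,
        V (k + 1) ω = V k ω * (1 + ∑ j, ρ k ω j * wn (ω ⟨k, hk⟩) j)) ∧
      (∀ k (hk : k < n), ∀ ω,
        (∑ i : Fin (d + 1), H (k + 1) (V k ω * (1 + ∑ j, ρ k ω j * wn i j))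
            (Function.update ω ⟨k, hk⟩ i)) =
          sInf {z : ℝ | ∃ u ∈ K, z =
            ∑ i : Fin (d + 1), H (k + 1) (V k ω * (1 + ∑ j, u j * wn i j))
              (Function.update ω ⟨k, hk⟩ i)}) ∧
      ∀ τ : (Fin n → Fin (d + 1)) → ℕ, IsStoppingTime ℱ (fun ω => (τ ω : WithTop ℕ)) → (∀ ω, τ ω ≤ n) →
        ∫ ω, max (Y (τ ω) ω - V (τ ω) ω) 0 ∂μ ≤ H 0 x (fun _ => 0)) :=
  stmt_19_general d n x wn K hK hKne hKcomp μ hμ ℱ hℱ Y hYad H hHn hHk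
end
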